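/- Define D_{δ,σ}(x,y) := (μ(B(x,δ)) μ(B(y,δ)))^{-1/2} (1 + ρ(x,y)/δ)^{-σ}. In a doubling metric measure space with exponent d, if σ > 2d, then for all x, y ∈ M and δ > 0: ∫_M D_{δ,σ}(x,u) D_{δ,σ}(u,y) dμ(u) ≤ c D_{δ,σ}(x,y) with c = 2^{σ+d+1}/(2^{-d} − 2^{d−σ}). -/

import Mathlib

/-!
By the triangle inequality, `1 + ρ(x,y)/δ ≤ 2 max (1 + ρ(x,u)/δ, 1 + ρ(u,y)/δ)`, so the product of
the two tails is at most `2^σ (1 + ρ(x,y)/δ)^{-σ}` times their sum, while the ball factors at `u`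
combine to `μ(B(u,δ))⁻¹`. It remains to bound `∫ μ(B(u,δ))⁻¹ (1 + ρ(u,z)/δ)^{-σ} dμ(u)` by
`2^{2d} / (1 - 2^{2d-σ})`: on the dyadic annulus where `1 + ρ(u,z)/δ ∈ [2^j, 2^{j+1})`, doubling
gives `μ(B(z,δ)) ≤ 2^{d(j+1)} μ(B(u,δ))` and `μ(annulus) ≤ 2^{d(j+1)} μ(B(z,δ))`, so the annulus
contributes at most `2^{2d} (2^{2d-σ})^j`, a geometric series because `σ > 2d`.
-/

open MeasureTheory Metric
open scoped ENNReal NNReal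

/-- The localization kernel `D_{δ,σ}(x,y)`. -/
noncomputable def Dker {M : Type*} [MetricSpace M] [MeasurableSpace M]
    (μ : Measure M) (δ σ : ℝ) (x y : M) : ℝ≥0∞ :=
  (μ (ball x δ) * μ (ball y δ)) ^ (-(1 / 2 : ℝ)) *
    ENNReal.ofReal ((1 + dist x y / δ) ^ (-σ))

open Set

theorem lowerSemicontinuous_measure_ball {M : Type*} [MetricSpace M] [MeasurableSpace M]
    (μ : Measure M) (r : ℝ) : LowerSemicontinuous fun u : M => μ (ball u r) := by
  intro u c (hc : c < μ (ball u r))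
  have hunion : ball u r = ⋃ s : Iio r, ball u s := by
    rw [← biUnion_lt_ball, iUnion_subtype]; rfl
  have hmono : Monotone fun s : Iio r => ball u s := fun s t hst => ball_subset_ball hst
  rw [hunion, hmono.measure_iUnion, lt_iSup_iff] at hc
  obtain ⟨⟨s, hs⟩, hcs⟩ := hc
  filter_upwards [ball_mem_nhds u (sub_pos.2 hs)] with v hv
  refine hcs.trans_le (measure_mono (ball_subset_ball' ?_))
  rw [mem_ball'] at hv
  linarith

section Doubling

variable {M : Type*} [MetricSpace M] [MeasurableSpace M] {μ : Measure M} {d : ℝ}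

theorem measure_ball_two_pow_mul_le
    (hdoub : ∀ (x : M) (r : ℝ), 0 < r →
      μ (ball x (2 * r)) ≤ ENNReal.ofReal ((2 : ℝ) ^ d) * μ (ball x r))
    (n : ℕ) (z : M) {r : ℝ} (hr : 0 < r) :
    μ (ball z (2 ^ n * r)) ≤ ENNReal.ofReal ((2 : ℝ) ^ d) ^ n * μ (ball z r) := by
  induction n with
  | zero => simp
  | succ n ih =>
    calc μ (ball z (2 ^ (n + 1) * r)) = μ (ball z (2 * (2 ^ n * r))) := by ring_nf
      _ ≤ ENNReal.ofReal (2 ^ d) * μ (ball z (2 ^ n * r)) := hdoub z _ (by positivity)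
      _ ≤ ENNReal.ofReal (2 ^ d) * (ENNReal.ofReal (2 ^ d) ^ n * μ (ball z r)) := by gcongr
      _ = ENNReal.ofReal (2 ^ d) ^ (n + 1) * μ (ball z r) := by ring

theorem inv_measure_ball_le_pow_mul_inv
    (hdoub : ∀ (x : M) (r : ℝ), 0 < r →
      μ (ball x (2 * r)) ≤ ENNReal.ofReal ((2 : ℝ) ^ d) * μ (ball x r))
    {n : ℕ} {z u : M} {δ : ℝ} (hδ : 0 < δ) (hzu : δ + dist z u ≤ 2 ^ n * δ) :
    (μ (ball u δ))⁻¹ ≤ ENNReal.ofReal ((2 : ℝ) ^ d) ^ n * (μ (ball z δ))⁻¹ := by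
  set K := ENNReal.ofReal ((2 : ℝ) ^ d) ^ n
  have hK0 : K ≠ 0 := pow_ne_zero _ (by simp; positivity)
  have hKtop : K ≠ ⊤ := ENNReal.pow_ne_top ENNReal.ofReal_ne_top
  have hle : μ (ball z δ) ≤ K * μ (ball u δ) :=
    (measure_mono (ball_subset_ball' hzu)).trans
      (measure_ball_two_pow_mul_le hdoub n u hδ)
  calc (μ (ball u δ))⁻¹ = K * (K * μ (ball u δ))⁻¹ := by
        rw [ENNReal.mul_inv (Or.inl hK0) (Or.inl hKtop), ← mul_assoc,
          ENNReal.mul_inv_cancel hK0 hKtop, one_mul]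
    _ ≤ K * (μ (ball z δ))⁻¹ := by gcongr

end Doubling

theorem Real.rpow_neg_le_two_rpow_mul_rpow_neg {p q σ : ℝ} (hq : 0 < q) (hqp : q ≤ 2 * p)
    (hσ : 0 ≤ σ) : p ^ (-σ) ≤ 2 ^ σ * q ^ (-σ) := by
  have hp : 0 < p := by linarith
  calc p ^ (-σ) = 2 ^ σ * (2 * p) ^ (-σ) := by
        rw [Real.mul_rpow zero_le_two hp.le, ← mul_assoc, ← Real.rpow_add two_pos,
          add_neg_cancel, Real.rpow_zero, one_mul]
    _ ≤ 2 ^ σ * q ^ (-σ) := by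
        have := Real.rpow_le_rpow_of_nonpos hq hqp (neg_nonpos.2 hσ)
        gcongr

theorem Real.rpow_neg_mul_rpow_neg_le {p q s σ : ℝ} (hp : 0 < p) (hq : 0 < q) (hs : 0 < s)
    (hspq : s ≤ p + q) (hσ : 0 ≤ σ) :
    p ^ (-σ) * q ^ (-σ) ≤ 2 ^ σ * s ^ (-σ) * (p ^ (-σ) + q ^ (-σ)) := by
  have hp' : 0 ≤ p ^ (-σ) := by positivity
  have hq' : 0 ≤ q ^ (-σ) := by positivity
  rcases le_total q p with hqp | hpq
  · calc p ^ (-σ) * q ^ (-σ) ≤ 2 ^ σ * s ^ (-σ) * q ^ (-σ) := by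
          gcongr; exact rpow_neg_le_two_rpow_mul_rpow_neg hs (by linarith) hσ
      _ ≤ 2 ^ σ * s ^ (-σ) * (p ^ (-σ) + q ^ (-σ)) := by gcongr; linarith
  · calc p ^ (-σ) * q ^ (-σ) ≤ p ^ (-σ) * (2 ^ σ * s ^ (-σ)) := by
          gcongr; exact rpow_neg_le_two_rpow_mul_rpow_neg hs (by linarith) hσ
      _ ≤ 2 ^ σ * s ^ (-σ) * (p ^ (-σ) + q ^ (-σ)) := by
          rw [mul_comm]; gcongr; linarith

theorem ENNReal.tsum_ofReal_mul_geometric {a r : ℝ} (ha : 0 ≤ a) (hr₀ : 0 ≤ r) (hr₁ : r < 1) :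
    ∑' j : ℕ, ENNReal.ofReal (a * r ^ j) = ENNReal.ofReal (a / (1 - r)) := by
  rw [← ENNReal.ofReal_tsum_of_nonneg (fun j => by positivity)
    ((summable_geometric_of_lt_one hr₀ hr₁).mul_left a), tsum_mul_left,
    tsum_geometric_of_lt_one hr₀ hr₁, div_eq_mul_inv]

section Annulus

variable {M : Type*} [MetricSpace M]

def dyadicAnnulus (z : M) (δ : ℝ) (j : ℕ) : Set M :=
  {u | (2 : ℝ) ^ j ≤ 1 + dist u z / δ ∧ 1 + dist u z / δ < 2 ^ (j + 1)}

theorem measurableSet_dyadicAnnulus [MeasurableSpace M] [OpensMeasurableSpace M]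
    (z : M) (δ : ℝ) (j : ℕ) : MeasurableSet (dyadicAnnulus z δ j) := by
  have hcont : Continuous fun u => 1 + dist u z / δ := by fun_prop
  exact (isClosed_le continuous_const hcont).measurableSet.inter
    (isOpen_lt hcont continuous_const).measurableSet

theorem iUnion_dyadicAnnulus (z : M) {δ : ℝ} (hδ : 0 ≤ δ) :
    ⋃ j, dyadicAnnulus z δ j = univ :=
  eq_univ_of_forall fun u => mem_iUnion.2 <|
    exists_nat_pow_near (le_add_of_nonneg_right (by positivity)) one_lt_two

theorem add_dist_lt_of_mem_dyadicAnnulus {z u : M} {δ : ℝ} {j : ℕ} (hδ : 0 < δ)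
    (hu : u ∈ dyadicAnnulus z δ j) : δ + dist u z < 2 ^ (j + 1) * δ := by
  have h := mul_lt_mul_of_pos_right hu.2 hδ
  rwa [add_mul, one_mul, div_mul_cancel₀ _ hδ.ne'] at h

theorem dyadicAnnulus_subset_ball (z : M) {δ : ℝ} (j : ℕ) (hδ : 0 < δ) :
    dyadicAnnulus z δ j ⊆ ball z (2 ^ (j + 1) * δ) := fun u hu => by
  have := add_dist_lt_of_mem_dyadicAnnulus hδ hu
  rw [mem_ball]
  linarith

end Annulus

noncomputable def ballTail {M : Type*} [MetricSpace M] [MeasurableSpace M]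
    (μ : Measure M) (δ σ : ℝ) (z u : M) : ℝ≥0∞ :=
  (μ (ball u δ))⁻¹ * ENNReal.ofReal ((1 + dist u z / δ) ^ (-σ))

section BallTail

variable {M : Type*} [MetricSpace M] [MeasurableSpace M] {μ : Measure M} {d δ σ : ℝ}

theorem ballTail_le_of_mem_dyadicAnnulus
    (hdoub : ∀ (x : M) (r : ℝ), 0 < r →
      μ (ball x (2 * r)) ≤ ENNReal.ofReal ((2 : ℝ) ^ d) * μ (ball x r))
    (hδ : 0 < δ) (hσ : 0 ≤ σ) {z u : M} {j : ℕ} (hu : u ∈ dyadicAnnulus z δ j) :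
    ballTail μ δ σ z u
      ≤ ENNReal.ofReal ((2 : ℝ) ^ d) ^ (j + 1) * (μ (ball z δ))⁻¹
          * ENNReal.ofReal (((2 : ℝ) ^ j) ^ (-σ)) := by
  have hzu : δ + dist z u ≤ 2 ^ (j + 1) * δ := by
    rw [dist_comm]; exact (add_dist_lt_of_mem_dyadicAnnulus hδ hu).le
  exact mul_le_mul' (inv_measure_ball_le_pow_mul_inv hdoub hδ hzu) <| ENNReal.ofReal_le_ofReal <|
    Real.rpow_le_rpow_of_nonpos (by positivity) hu.1 (neg_nonpos.2 hσ)

theorem dyadicAnnulus_term_le (ν : ℝ≥0∞) (j : ℕ) :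
    ENNReal.ofReal ((2 : ℝ) ^ d) ^ (j + 1) * ν⁻¹ * ENNReal.ofReal (((2 : ℝ) ^ j) ^ (-σ))
        * (ENNReal.ofReal ((2 : ℝ) ^ d) ^ (j + 1) * ν)
      ≤ ENNReal.ofReal ((2 : ℝ) ^ (2 * d) * ((2 : ℝ) ^ (2 * d - σ)) ^ j) := by
  have hexp : ((2 : ℝ) ^ d) ^ (j + 1) * ((2 : ℝ) ^ d) ^ (j + 1) * ((2 : ℝ) ^ j) ^ (-σ)
      = (2 : ℝ) ^ (2 * d) * ((2 : ℝ) ^ (2 * d - σ)) ^ j := by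
    simp only [← Real.rpow_natCast, ← Real.rpow_mul zero_le_two, ← Real.rpow_add two_pos]
    push_cast
    ring_nf
  calc _ = ENNReal.ofReal (((2 : ℝ) ^ d) ^ (j + 1) * ((2 : ℝ) ^ d) ^ (j + 1)
          * ((2 : ℝ) ^ j) ^ (-σ)) * (ν⁻¹ * ν) := by
        rw [ENNReal.ofReal_mul (by positivity), ENNReal.ofReal_mul (by positivity),
          ENNReal.ofReal_pow (by positivity)]
        ring
    _ ≤ ENNReal.ofReal (((2 : ℝ) ^ d) ^ (j + 1) * ((2 : ℝ) ^ d) ^ (j + 1)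
          * ((2 : ℝ) ^ j) ^ (-σ)) * 1 := by gcongr; exact ENNReal.inv_mul_le_one ν
    _ = _ := by rw [mul_one, hexp]

theorem lintegral_ballTail_le [OpensMeasurableSpace M]
    (hdoub : ∀ (x : M) (r : ℝ), 0 < r →
      μ (ball x (2 * r)) ≤ ENNReal.ofReal ((2 : ℝ) ^ d) * μ (ball x r))
    (hδ : 0 < δ) (hσ₀ : 0 ≤ σ) (hσ : 2 * d < σ) (z : M) :
    ∫⁻ u, ballTail μ δ σ z u ∂μ
      ≤ ENNReal.ofReal ((2 : ℝ) ^ (2 * d) / (1 - (2 : ℝ) ^ (2 * d - σ))) := by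
  set C := ENNReal.ofReal ((2 : ℝ) ^ d)
  have hr : (2 : ℝ) ^ (2 * d - σ) < 1 :=
    Real.rpow_lt_one_of_one_lt_of_neg one_lt_two (by linarith)
  calc ∫⁻ u, ballTail μ δ σ z u ∂μ
      = ∫⁻ u in ⋃ j, dyadicAnnulus z δ j, ballTail μ δ σ z u ∂μ := by
        rw [iUnion_dyadicAnnulus z hδ.le, setLIntegral_univ]
    _ ≤ ∑' j, ∫⁻ u in dyadicAnnulus z δ j, ballTail μ δ σ z u ∂μ := lintegral_iUnion_le _ _
    _ ≤ ∑' j, ∫⁻ _ in dyadicAnnulus z δ j,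
          C ^ (j + 1) * (μ (ball z δ))⁻¹ * ENNReal.ofReal (((2 : ℝ) ^ j) ^ (-σ)) ∂μ :=
        ENNReal.tsum_le_tsum fun j => setLIntegral_mono' (measurableSet_dyadicAnnulus z δ j)
          fun u hu => ballTail_le_of_mem_dyadicAnnulus hdoub hδ hσ₀ hu
    _ ≤ ∑' j : ℕ, C ^ (j + 1) * (μ (ball z δ))⁻¹ * ENNReal.ofReal (((2 : ℝ) ^ j) ^ (-σ))
          * (C ^ (j + 1) * μ (ball z δ)) := by
        refine ENNReal.tsum_le_tsum fun j => ?_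
        rw [setLIntegral_const]
        gcongr
        exact (measure_mono (dyadicAnnulus_subset_ball z j hδ)).trans
          (measure_ball_two_pow_mul_le hdoub (j + 1) z hδ)
    _ ≤ ∑' j : ℕ, ENNReal.ofReal ((2 : ℝ) ^ (2 * d) * ((2 : ℝ) ^ (2 * d - σ)) ^ j) :=
        ENNReal.tsum_le_tsum fun j => dyadicAnnulus_term_le _ j
    _ = _ := ENNReal.tsum_ofReal_mul_geometric (by positivity) (by positivity) hr

theorem measurable_ballTail [OpensMeasurableSpace M] (z : M) : Measurable (ballTail μ δ σ z) :=
  (lowerSemicontinuous_measure_ball μ δ).measurable.inv.mul (by fun_prop)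

theorem Dker_mul_Dker {x u y : M} (hx : μ (ball x δ) ≠ 0) (hu : μ (ball u δ) ≠ 0)
    (hy : μ (ball y δ) ≠ 0) :
    Dker μ δ σ x u * Dker μ δ σ u y
      = (μ (ball x δ) * μ (ball y δ)) ^ (-(1 / 2 : ℝ)) * (μ (ball u δ))⁻¹
          * (ENNReal.ofReal ((1 + dist x u / δ) ^ (-σ))
            * ENNReal.ofReal ((1 + dist u y / δ) ^ (-σ))) := by
  have hsq : μ (ball u δ) ^ (-(1 / 2 : ℝ)) * μ (ball u δ) ^ (-(1 / 2 : ℝ)) = (μ (ball u δ))⁻¹ := by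
    rw [← pow_two, ← ENNReal.rpow_two, ← ENNReal.rpow_mul, ← ENNReal.rpow_neg_one]
    norm_num
  simp only [Dker, ENNReal.mul_rpow_of_ne_zero hx hu, ENNReal.mul_rpow_of_ne_zero hu hy,
    ENNReal.mul_rpow_of_ne_zero hx hy, ← hsq]
  ring

theorem Dker_mul_Dker_le {x u y : M} (hx : μ (ball x δ) ≠ 0) (hu : μ (ball u δ) ≠ 0)
    (hy : μ (ball y δ) ≠ 0) (hδ : 0 < δ) (hσ : 0 ≤ σ) :
    Dker μ δ σ x u * Dker μ δ σ u y
      ≤ Dker μ δ σ x y * ENNReal.ofReal (2 ^ σ) * (ballTail μ δ σ x u + ballTail μ δ σ y u) := by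
  have htri : 1 + dist x y / δ ≤ (1 + dist x u / δ) + (1 + dist u y / δ) := by
    have := div_le_div_of_nonneg_right (dist_triangle x u y) hδ.le
    rw [add_div] at this
    linarith
  have key := Real.rpow_neg_mul_rpow_neg_le (σ := σ) (by positivity) (by positivity)
    (by positivity) htri hσ
  rw [Dker_mul_Dker hx hu hy, ← ENNReal.ofReal_mul (by positivity)]
  calc _ ≤ (μ (ball x δ) * μ (ball y δ)) ^ (-(1 / 2 : ℝ)) * (μ (ball u δ))⁻¹
          * ENNReal.ofReal (2 ^ σ * (1 + dist x y / δ) ^ (-σ)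
            * ((1 + dist x u / δ) ^ (-σ) + (1 + dist u y / δ) ^ (-σ))) := by
        gcongr
    _ = _ := by
        rw [ENNReal.ofReal_mul (by positivity), ENNReal.ofReal_mul (by positivity),
          ENNReal.ofReal_add (by positivity) (by positivity)]
        simp only [Dker, ballTail, dist_comm u x]
        ring

end BallTail

theorem two_rpow_mul_add_self_eq {d σ : ℝ} (hσ : 2 * d < σ) :
    (2 : ℝ) ^ σ * ((2 : ℝ) ^ (2 * d) / (1 - (2 : ℝ) ^ (2 * d - σ))
        + (2 : ℝ) ^ (2 * d) / (1 - (2 : ℝ) ^ (2 * d - σ)))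
      = (2 : ℝ) ^ (σ + d + 1) / ((2 : ℝ) ^ (-d) - (2 : ℝ) ^ (d - σ)) := by
  have hr : (2 : ℝ) ^ (2 * d - σ) < 1 :=
    Real.rpow_lt_one_of_one_lt_of_neg one_lt_two (by linarith)
  have hden : (2 : ℝ) ^ (-d) - (2 : ℝ) ^ (d - σ) = (2 : ℝ) ^ (-d) * (1 - (2 : ℝ) ^ (2 * d - σ)) := by
    rw [mul_sub, mul_one, ← Real.rpow_add two_pos]
    ring_nf
  have hnum : (2 : ℝ) ^ (σ + d + 1) = (2 : ℝ) ^ (-d) * (2 ^ σ * 2 * 2 ^ (2 * d)) := by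
    rw [show σ + d + 1 = -d + (σ + 1 + 2 * d) by ring, Real.rpow_add two_pos,
      Real.rpow_add two_pos, Real.rpow_add two_pos, Real.rpow_one]
  have h1 : 1 - (2 : ℝ) ^ (2 * d - σ) ≠ 0 := by linarith
  rw [hden, hnum, mul_div_mul_left _ _ (by positivity)]
  field_simp
  ring

theorem Dker_composition_general {M : Type*} [MetricSpace M] [MeasurableSpace M]
    [OpensMeasurableSpace M]
    (μ : Measure M) (d : ℝ) (hd : 0 < d)
    (hpos : ∀ (x : M) (r : ℝ), 0 < r → 0 < μ (ball x r))
    (hdoub : ∀ (x : M) (r : ℝ), 0 < r →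
      μ (ball x (2 * r)) ≤ ENNReal.ofReal ((2 : ℝ) ^ d) * μ (ball x r))
    (σ δ : ℝ) (hσ : 2 * d < σ) (hδ : 0 < δ) (x y : M) :
    ∫⁻ u, Dker μ δ σ x u * Dker μ δ σ u y ∂μ
      ≤ ENNReal.ofReal ((2 : ℝ) ^ (σ + d + 1) / ((2 : ℝ) ^ (-d) - (2 : ℝ) ^ (d - σ)))
          * Dker μ δ σ x y := by
  have hσ₀ : 0 ≤ σ := by linarith
  have hball (z : M) : μ (ball z δ) ≠ 0 := (hpos z δ hδ).ne'
  set k := (2 : ℝ) ^ (2 * d) / (1 - (2 : ℝ) ^ (2 * d - σ))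
  have hk : 0 ≤ k := div_nonneg (by positivity)
    (sub_nonneg.2 (Real.rpow_le_one_of_one_le_of_nonpos one_le_two (by linarith)))
  calc ∫⁻ u, Dker μ δ σ x u * Dker μ δ σ u y ∂μ
      ≤ ∫⁻ u, Dker μ δ σ x y * ENNReal.ofReal (2 ^ σ)
          * (ballTail μ δ σ x u + ballTail μ δ σ y u) ∂μ :=
        lintegral_mono fun u => Dker_mul_Dker_le (hball x) (hball u) (hball y) hδ hσ₀
    _ = Dker μ δ σ x y * ENNReal.ofReal (2 ^ σ)
          * (∫⁻ u, ballTail μ δ σ x u ∂μ + ∫⁻ u, ballTail μ δ σ y u ∂μ) := by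
        have hmeas : Measurable fun u => ballTail μ δ σ x u + ballTail μ δ σ y u :=
          (measurable_ballTail x).add (measurable_ballTail y)
        rw [lintegral_const_mul _ hmeas, lintegral_add_left (measurable_ballTail x)]
    _ ≤ Dker μ δ σ x y * ENNReal.ofReal (2 ^ σ) * (ENNReal.ofReal k + ENNReal.ofReal k) := by
        gcongr <;> exact lintegral_ballTail_le hdoub hδ hσ₀ hσ _
    _ = _ := by
        rw [mul_assoc, ← ENNReal.ofReal_add hk hk, ← ENNReal.ofReal_mul (by positivity),
          two_rpow_mul_add_self_eq hσ, mul_comm]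

theorem Dker_composition {M : Type*} [MetricSpace M] [MeasurableSpace M]
    [OpensMeasurableSpace M]
    (μ : Measure M) (d : ℝ) (hd : 0 < d)
    (hpos : ∀ (x : M) (r : ℝ), 0 < r → 0 < μ (ball x r))
    (hfin : ∀ (x : M) (r : ℝ), 0 < r → μ (ball x r) < ⊤)
    (hdoub : ∀ (x : M) (r : ℝ), 0 < r →
      μ (ball x (2 * r)) ≤ ENNReal.ofReal ((2 : ℝ) ^ d) * μ (ball x r))
    (σ δ : ℝ) (hσ : 2 * d < σ) (hδ : 0 < δ) (x y : M) :
    ∫⁻ u, Dker μ δ σ x u * Dker μ δ σ u y ∂μ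
      ≤ ENNReal.ofReal ((2 : ℝ) ^ (σ + d + 1) / ((2 : ℝ) ^ (-d) - (2 : ℝ) ^ (d - σ)))
          * Dker μ δ σ x y :=
  Dker_composition_general μ d hd hpos hdoub σ δ hσ hδ x y
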